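/- With up^[n] defined by up^[1] = ↑ and up^[n] = {up^[n-1] | *}, for every n ≥ 1 the game up^[n] + * equals the game {0, G | 0, G} where G = {0, up^[n] + * | 0, up^[n] + *}. -/

import Mathlib

universe u

namespace SetTheory

/-- Conway pre-games (removed from Mathlib; reintroduced with the old definition). -/
inductive PGame : Type (u + 1)
  | mk : ∀ α β : Type u, (α → PGame) → (β → PGame) → PGame

namespace PGame

/-- Pre-game from lists of Left and Right options. -/
def ofLists (L R : List PGame.{u}) : PGame.{u} :=
  mk (ULift (Fin L.length)) (ULift (Fin R.length)) (fun i => L[i.down.1]) fun j => R[j.down.1]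

instance : Zero PGame.{u} :=
  ⟨mk PEmpty PEmpty PEmpty.elim PEmpty.elim⟩

/-- Disjunctive sum of pre-games. -/
noncomputable def add (x y : PGame.{u}) : PGame.{u} :=
  PGame.rec (motive := fun _ => PGame.{u} → PGame.{u})
    (fun xl xr _ _ IHxl IHxr y =>
      PGame.rec (motive := fun _ => PGame.{u})
        (fun yl yr yL yR IHyl IHyr =>
          mk (xl ⊕ yl) (xr ⊕ yr) (Sum.elim (fun i => IHxl i (mk yl yr yL yR)) IHyl)
            (Sum.elim (fun i => IHxr i (mk yl yr yL yR)) IHyr)) y) x y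

noncomputable instance : Add PGame.{u} := ⟨add⟩

/-- Simultaneous definition of `≤` (first component) and `⧏` (second component). -/
noncomputable def leLf (x : PGame.{u}) : PGame.{u} → Prop × Prop :=
  PGame.rec (motive := fun _ => PGame.{u} → Prop × Prop)
    (fun _ _ _ _ IHxl IHxr y =>
      PGame.rec (motive := fun _ => Prop × Prop)
        (fun yl yr yL yR IHyl IHyr =>
          ((∀ i, (IHxl i (mk yl yr yL yR)).2) ∧ (∀ j, (IHyr j).2),
           (∃ i, (IHyl i).1) ∨ (∃ j, (IHxr j (mk yl yr yL yR)).1))) y) x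

instance : LE PGame.{u} := ⟨fun x y => (leLf x y).1⟩

/-- Game equivalence: `x ≤ y ∧ y ≤ x`. -/
def Equiv (x y : PGame.{u}) : Prop := x ≤ y ∧ y ≤ x

instance : HasEquiv PGame.{u} := ⟨Equiv⟩

end PGame

end SetTheory

open SetTheory PGame

/-- star = {0|0} -/
noncomputable def star' : PGame := PGame.ofLists [0] [0]
/-- up = {0|*} -/
noncomputable def up' : PGame := PGame.ofLists [0] [star']
/-- down = {*|0} -/
noncomputable def down' : PGame := PGame.ofLists [star'] [0]

/-- sum of n copies of up -/
noncomputable def nUp : ℕ → PGame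
  | 0 => 0
  | n + 1 => nUp n + up'

/-- sum of n copies of down -/
noncomputable def nDown : ℕ → PGame
  | 0 => 0
  | n + 1 => nDown n + down'

/-- iterated up: up^[1] = ↑, up^[n] = {up^[n-1] | *} -/
noncomputable def upIter : ℕ → PGame
  | 0 => 0
  | 1 => up'
  | n + 2 => PGame.ofLists [upIter (n + 1)] [star']

/-- iterated down: down_[1] = ↓, down_[n] = {* | down_[n-1]} -/
noncomputable def downIter : ℕ → PGame
  | 0 => 0
  | 1 => down'
  | n + 2 => PGame.ofLists [star'] [downIter (n + 1)]

/-!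
Let `X = ↑^[n] + *` and `G = {0, X | 0, X}`. Since `↑^[n] ≥ 0` and `* + * = 0`, we have `0 ⧏ X`
and every Right option of `X` is `≥ 0`, whence `{0, G | 0, G} ≤ X`. Conversely `X ⧏ 0` and
`X ⧏ G`, and no Left option of `X` is `≥ {0, G | 0, G}`: the option `↑^[n-1] + *` is `≤ G`
(its own Left option `↑^[n-2] + *` is `≤ X` as `↑^[k]` is monotone in `k`), and the option
`↑^[n] + 0` reverses through its Right option `* ≤ {0, G | 0, G}`.
-/

namespace SetTheory.PGame

-- Options are handled as sets, so the index types of `PGame.mk` never appear below.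
def leftMoves : PGame.{u} → Set PGame.{u}
  | mk _ _ L _ => Set.range L

def rightMoves : PGame.{u} → Set PGame.{u}
  | mk _ _ _ R => Set.range R

def LF (x y : PGame.{u}) : Prop := (leLf x y).2

infixl:50 " ⧏ " => LF

theorem le_iff_forall_lf {x y : PGame.{u}} :
    x ≤ y ↔ (∀ z ∈ x.leftMoves, z ⧏ y) ∧ ∀ z ∈ y.rightMoves, x ⧏ z := by
  cases x; cases y
  simp only [leftMoves, rightMoves, Set.forall_mem_range]
  exact Iff.rfl

theorem lf_iff_exists_le {x y : PGame.{u}} :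
    x ⧏ y ↔ (∃ z ∈ y.leftMoves, x ≤ z) ∨ ∃ z ∈ x.rightMoves, z ≤ y := by
  cases x; cases y
  simp only [leftMoves, rightMoves, Set.exists_range_iff]
  exact Iff.rfl

theorem lf_of_le_of_mem_leftMoves {x y z : PGame.{u}} (hz : z ∈ y.leftMoves) (h : x ≤ z) :
    x ⧏ y :=
  lf_iff_exists_le.2 (.inl ⟨z, hz, h⟩)

theorem lf_of_mem_rightMoves_of_le {x y z : PGame.{u}} (hz : z ∈ x.rightMoves) (h : z ≤ y) :
    x ⧏ y :=
  lf_iff_exists_le.2 (.inr ⟨z, hz, h⟩)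

@[elab_as_elim]
theorem moves_induction {P : PGame.{u} → Prop}
    (ih : ∀ x, (∀ y ∈ x.leftMoves, P y) → (∀ y ∈ x.rightMoves, P y) → P x) (x : PGame.{u}) :
    P x := by
  induction x with
  | mk _ _ L R ihL ihR =>
    exact ih _ (Set.forall_mem_range.2 ihL) (Set.forall_mem_range.2 ihR)

theorem le_trans_and_lf (x y z : PGame.{u}) :
    (x ≤ y → y ≤ z → x ≤ z) ∧ (x ≤ y → y ⧏ z → x ⧏ z) ∧ (x ⧏ y → y ≤ z → x ⧏ z) := by
  induction x using moves_induction generalizing y z with | ih x ihxL ihxR =>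
  induction y using moves_induction generalizing z with | ih y ihyL ihyR =>
  induction z using moves_induction with | ih z ihzL ihzR =>
  refine ⟨fun hxy hyz => le_iff_forall_lf.2 ⟨fun a ha => ?_, fun c hc => ?_⟩,
    fun hxy hyz => ?_, fun hxy hyz => ?_⟩
  · exact (ihxL a ha y z).2.2 ((le_iff_forall_lf.1 hxy).1 a ha) hyz
  · exact (ihzR c hc).2.1 hxy ((le_iff_forall_lf.1 hyz).2 c hc)
  · obtain ⟨c, hc, hyc⟩ | ⟨b, hb, hbz⟩ := lf_iff_exists_le.1 hyz
    · exact lf_of_le_of_mem_leftMoves hc ((ihzL c hc).1 hxy hyc)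
    · exact (ihyR b hb z).2.2 ((le_iff_forall_lf.1 hxy).2 b hb) hbz
  · obtain ⟨b, hb, hxb⟩ | ⟨a, ha, hay⟩ := lf_iff_exists_le.1 hxy
    · exact (ihyL b hb z).2.1 hxb ((le_iff_forall_lf.1 hyz).1 b hb)
    · exact lf_of_mem_rightMoves_of_le ha ((ihxR a ha y z).1 hay hyz)

instance : Preorder PGame.{u} where
  le_refl x := by
    induction x using moves_induction with
    | ih x ihL ihR =>
      exact le_iff_forall_lf.2 ⟨fun z hz => lf_of_le_of_mem_leftMoves hz (ihL z hz),
        fun z hz => lf_of_mem_rightMoves_of_le hz (ihR z hz)⟩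
  le_trans x y z := (le_trans_and_lf x y z).1

@[simp]
theorem leftMoves_zero : (0 : PGame.{u}).leftMoves = ∅ :=
  Set.range_eq_empty _

@[simp]
theorem rightMoves_zero : (0 : PGame.{u}).rightMoves = ∅ :=
  Set.range_eq_empty _

@[simp]
theorem mem_leftMoves_ofLists {L R : List PGame.{u}} {x : PGame.{u}} :
    x ∈ (ofLists L R).leftMoves ↔ x ∈ L := by
  simp only [ofLists, leftMoves, Set.mem_range, List.mem_iff_getElem]
  exact ⟨fun ⟨⟨i⟩, h⟩ => ⟨i, i.2, h⟩, fun ⟨i, hi, h⟩ => ⟨⟨i, hi⟩, h⟩⟩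

@[simp]
theorem mem_rightMoves_ofLists {L R : List PGame.{u}} {x : PGame.{u}} :
    x ∈ (ofLists L R).rightMoves ↔ x ∈ R := by
  simp only [ofLists, rightMoves, Set.mem_range, List.mem_iff_getElem]
  exact ⟨fun ⟨⟨i⟩, h⟩ => ⟨i, i.2, h⟩, fun ⟨i, hi, h⟩ => ⟨⟨i, hi⟩, h⟩⟩

@[simp]
theorem leftMoves_add (x y : PGame.{u}) :
    (x + y).leftMoves = (· + y) '' x.leftMoves ∪ (x + ·) '' y.leftMoves := by
  cases x; cases y
  exact (Set.Sum.elim_range _ _).trans (by simp only [leftMoves, ← Set.range_comp]; rfl)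

@[simp]
theorem rightMoves_add (x y : PGame.{u}) :
    (x + y).rightMoves = (· + y) '' x.rightMoves ∪ (x + ·) '' y.rightMoves := by
  cases x; cases y
  exact (Set.Sum.elim_range _ _).trans (by simp only [rightMoves, ← Set.range_comp]; rfl)

section Add

variable {x y z : PGame.{u}}

theorem add_right_mem_leftMoves_add (h : z ∈ x.leftMoves) (y : PGame.{u}) :
    z + y ∈ (x + y).leftMoves := by
  rw [leftMoves_add]; exact .inl ⟨z, h, rfl⟩

theorem add_left_mem_leftMoves_add (x : PGame.{u}) (h : z ∈ y.leftMoves) :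
    x + z ∈ (x + y).leftMoves := by
  rw [leftMoves_add]; exact .inr ⟨z, h, rfl⟩

theorem add_right_mem_rightMoves_add (h : z ∈ x.rightMoves) (y : PGame.{u}) :
    z + y ∈ (x + y).rightMoves := by
  rw [rightMoves_add]; exact .inl ⟨z, h, rfl⟩

theorem add_left_mem_rightMoves_add (x : PGame.{u}) (h : z ∈ y.rightMoves) :
    x + z ∈ (x + y).rightMoves := by
  rw [rightMoves_add]; exact .inr ⟨z, h, rfl⟩

end Add

theorem add_zero_equiv (x : PGame.{u}) : x + 0 ≈ x := by
  induction x using moves_induction with | ih x ihL ihR =>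
  refine ⟨le_iff_forall_lf.2 ⟨?_, fun z hz => ?_⟩, le_iff_forall_lf.2 ⟨fun z hz => ?_, ?_⟩⟩
  · rw [leftMoves_add, leftMoves_zero, Set.image_empty, Set.union_empty]
    rintro _ ⟨z, hz, rfl⟩
    exact lf_of_le_of_mem_leftMoves hz (ihL z hz).1
  · exact lf_of_mem_rightMoves_of_le (add_right_mem_rightMoves_add hz 0) (ihR z hz).1
  · exact lf_of_le_of_mem_leftMoves (add_right_mem_leftMoves_add hz 0) (ihL z hz).2
  · rw [rightMoves_add, rightMoves_zero, Set.image_empty, Set.union_empty]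
    rintro _ ⟨z, hz, rfl⟩
    exact lf_of_mem_rightMoves_of_le hz (ihR z hz).2

theorem zero_add_equiv (x : PGame.{u}) : 0 + x ≈ x := by
  induction x using moves_induction with | ih x ihL ihR =>
  refine ⟨le_iff_forall_lf.2 ⟨?_, fun z hz => ?_⟩, le_iff_forall_lf.2 ⟨fun z hz => ?_, ?_⟩⟩
  · rw [leftMoves_add, leftMoves_zero, Set.image_empty, Set.empty_union]
    rintro _ ⟨z, hz, rfl⟩
    exact lf_of_le_of_mem_leftMoves hz (ihL z hz).1
  · exact lf_of_mem_rightMoves_of_le (add_left_mem_rightMoves_add 0 hz) (ihR z hz).1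
  · exact lf_of_le_of_mem_leftMoves (add_left_mem_leftMoves_add 0 hz) (ihL z hz).2
  · rw [rightMoves_add, rightMoves_zero, Set.image_empty, Set.empty_union]
    rintro _ ⟨z, hz, rfl⟩
    exact lf_of_mem_rightMoves_of_le hz (ihR z hz).2

theorem add_right_le_and_lf (x y z : PGame.{u}) :
    (x ≤ y → x + z ≤ y + z) ∧ (x ⧏ y → x + z ⧏ y + z) := by
  induction x using moves_induction generalizing y z with | ih x ihxL ihxR =>
  induction y using moves_induction generalizing z with | ih y ihyL ihyR =>
  induction z using moves_induction with | ih z ihzL ihzR =>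
  refine ⟨fun h => le_iff_forall_lf.2 ⟨?_, ?_⟩, fun h => ?_⟩
  · rw [leftMoves_add]
    rintro _ (⟨a, ha, rfl⟩ | ⟨c, hc, rfl⟩)
    · exact (ihxL a ha y z).2 ((le_iff_forall_lf.1 h).1 a ha)
    · exact lf_of_le_of_mem_leftMoves (add_left_mem_leftMoves_add y hc) ((ihzL c hc).1 h)
  · rw [rightMoves_add]
    rintro _ (⟨b, hb, rfl⟩ | ⟨c, hc, rfl⟩)
    · exact (ihyR b hb z).2 ((le_iff_forall_lf.1 h).2 b hb)
    · exact lf_of_mem_rightMoves_of_le (add_left_mem_rightMoves_add x hc) ((ihzR c hc).1 h)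
  · obtain ⟨b, hb, hxb⟩ | ⟨a, ha, hay⟩ := lf_iff_exists_le.1 h
    · exact lf_of_le_of_mem_leftMoves (add_right_mem_leftMoves_add hb z) ((ihyL b hb z).1 hxb)
    · exact lf_of_mem_rightMoves_of_le (add_right_mem_rightMoves_add ha z)
        ((ihxR a ha y z).1 hay)

instance : AddRightMono PGame.{u} :=
  ⟨fun z _ _ h => (add_right_le_and_lf _ _ z).1 h⟩

theorem le_add_of_nonneg_left {x : PGame.{u}} (h : 0 ≤ x) (y : PGame.{u}) : y ≤ x + y :=
  calc y ≤ 0 + y := (zero_add_equiv y).2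
    _ ≤ x + y := by gcongr

end SetTheory.PGame

@[simp]
theorem leftMoves_star' : star'.leftMoves = {0} := by
  ext; simp [star']

@[simp]
theorem rightMoves_star' : star'.rightMoves = {0} := by
  ext; simp [star']

@[simp]
theorem upIter_zero : upIter 0 = 0 :=
  rfl

theorem upIter_succ (n : ℕ) : upIter (n + 1) = PGame.ofLists [upIter n] [star'] := by
  cases n <;> rfl

@[simp]
theorem leftMoves_upIter_succ (n : ℕ) : (upIter (n + 1)).leftMoves = {upIter n} := by
  ext; simp [upIter_succ]

@[simp]
theorem rightMoves_upIter_succ (n : ℕ) : (upIter (n + 1)).rightMoves = {star'} := by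
  ext; simp [upIter_succ]

theorem zero_lf_star' : 0 ⧏ star' :=
  lf_of_le_of_mem_leftMoves (by simp) le_rfl

theorem star'_lf_zero : star' ⧏ 0 :=
  lf_of_mem_rightMoves_of_le (by simp) le_rfl

theorem zero_le_upIter : ∀ n, 0 ≤ upIter n
  | 0 => le_rfl
  | n + 1 => le_iff_forall_lf.2 ⟨by simp, by simpa using zero_lf_star'⟩

theorem upIter_le_succ : ∀ n, upIter n ≤ upIter (n + 1)
  | 0 => zero_le_upIter 1
  | n + 1 => le_iff_forall_lf.2
    ⟨by simpa using lf_of_le_of_mem_leftMoves (by simp) (upIter_le_succ n),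
      by simpa using lf_of_mem_rightMoves_of_le (by simp) le_rfl⟩

theorem upIter_monotone : Monotone upIter :=
  monotone_nat_of_le_succ upIter_le_succ

theorem star'_add_star'_le_zero : star' + star' ≤ 0 := by
  refine le_iff_forall_lf.2 ⟨?_, by simp⟩
  simp only [leftMoves_add, leftMoves_star', Set.image_singleton]
  rintro _ (rfl | rfl)
  · exact lf_of_mem_rightMoves_of_le (add_left_mem_rightMoves_add 0 (by simp))
      (add_zero_equiv 0).1
  · exact lf_of_mem_rightMoves_of_le (add_right_mem_rightMoves_add (by simp) 0)
      (add_zero_equiv 0).1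

theorem zero_le_star'_add_star' : 0 ≤ star' + star' := by
  refine le_iff_forall_lf.2 ⟨by simp, ?_⟩
  simp only [rightMoves_add, rightMoves_star', Set.image_singleton]
  rintro _ (rfl | rfl)
  · exact lf_of_le_of_mem_leftMoves (add_left_mem_leftMoves_add 0 (by simp))
      (add_zero_equiv 0).2
  · exact lf_of_le_of_mem_leftMoves (add_right_mem_leftMoves_add (by simp) 0)
      (add_zero_equiv 0).2

theorem upIter_add_star'_lf_zero : ∀ n, upIter n + star' ⧏ 0
  | 0 => lf_of_mem_rightMoves_of_le (add_left_mem_rightMoves_add _ (by simp))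
      (add_zero_equiv 0).1
  | n + 1 => lf_of_mem_rightMoves_of_le (add_right_mem_rightMoves_add (by simp) _)
      star'_add_star'_le_zero

theorem zero_lf_upIter_add_star' (n : ℕ) : 0 ⧏ upIter n + star' :=
  lf_of_le_of_mem_leftMoves (add_left_mem_leftMoves_add _ (by simp))
    ((zero_le_upIter n).trans (add_zero_equiv _).2)

theorem star'_le_upIter_add_star' (n : ℕ) : star' ≤ upIter n + star' :=
  le_add_of_nonneg_left (zero_le_upIter n) star'

theorem star'_lf_upIter_succ_add_star' (n : ℕ) : star' ⧏ upIter (n + 1) + star' :=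
  lf_of_le_of_mem_leftMoves (add_right_mem_leftMoves_add (by simp) _)
    (star'_le_upIter_add_star' n)

theorem upIter_succ_add_zero_lf (n : ℕ) {y : PGame} (h : star' ≤ y) : upIter (n + 1) + 0 ⧏ y :=
  lf_of_mem_rightMoves_of_le (add_right_mem_rightMoves_add (by simp) 0)
    ((add_zero_equiv _).1.trans h)

theorem zero_le_of_mem_rightMoves_upIter_succ_add_star' {n : ℕ} {z : PGame}
    (hz : z ∈ (upIter (n + 1) + star').rightMoves) : 0 ≤ z := by
  simp only [rightMoves_add, rightMoves_upIter_succ, rightMoves_star', Set.image_singleton,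
    Set.mem_union, Set.mem_singleton_iff] at hz
  rcases hz with rfl | rfl
  · exact zero_le_star'_add_star'
  · exact (zero_le_upIter _).trans (add_zero_equiv _).2

theorem ofLists_pair_zero_le {x y : PGame} (h0 : 0 ⧏ y) (hx : x ⧏ y)
    (hR : ∀ z ∈ y.rightMoves, 0 ≤ z) : PGame.ofLists [0, x] [0, x] ≤ y :=
  le_iff_forall_lf.2 ⟨by simpa using ⟨h0, hx⟩,
    fun z hz => lf_of_mem_rightMoves_of_le (by simp) (hR z hz)⟩

theorem star'_le_ofLists_pair_zero {x : PGame} (h : star' ⧏ x) :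
    star' ≤ PGame.ofLists [0, x] [0, x] :=
  le_iff_forall_lf.2 ⟨by simpa using lf_of_le_of_mem_leftMoves (by simp) le_rfl,
    by simpa using ⟨star'_lf_zero, h⟩⟩

theorem upIter_add_star'_le_ofLists (m : ℕ) :
    upIter m + star' ≤
      PGame.ofLists [0, upIter (m + 1) + star'] [0, upIter (m + 1) + star'] := by
  have hX : upIter m + star' ⧏ upIter (m + 1) + star' :=
    lf_of_le_of_mem_leftMoves (add_right_mem_leftMoves_add (by simp) _) le_rfl
  refine le_iff_forall_lf.2 ⟨?_, by simpa using ⟨upIter_add_star'_lf_zero m, hX⟩⟩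
  rw [leftMoves_add, leftMoves_star', Set.image_singleton]
  cases m with
  | zero =>
    rw [upIter_zero, leftMoves_zero, Set.image_empty, Set.empty_union]
    rintro _ rfl
    exact lf_of_le_of_mem_leftMoves (by simp) (add_zero_equiv 0).1
  | succ k =>
    rw [leftMoves_upIter_succ, Set.image_singleton]
    rintro _ (rfl | rfl)
    · refine lf_of_le_of_mem_leftMoves (z := upIter (k + 2) + star') (by simp) ?_
      gcongr
      exact upIter_monotone (by omega)
    · exact upIter_succ_add_zero_lf k
        (star'_le_ofLists_pair_zero (star'_lf_upIter_succ_add_star' _))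

theorem ofLists_le_upIter_succ_add_star' (m : ℕ) {G : PGame}
    (hG : G = PGame.ofLists [0, upIter (m + 1) + star'] [0, upIter (m + 1) + star']) :
    PGame.ofLists [0, G] [0, G] ≤ upIter (m + 1) + star' :=
  ofLists_pair_zero_le (zero_lf_upIter_add_star' _)
    (lf_of_mem_rightMoves_of_le (by simp [hG]) le_rfl)
    fun _ => zero_le_of_mem_rightMoves_upIter_succ_add_star'

theorem upIter_succ_add_star'_le_ofLists (m : ℕ) {G : PGame}
    (hG : G = PGame.ofLists [0, upIter (m + 1) + star'] [0, upIter (m + 1) + star']) :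
    upIter (m + 1) + star' ≤ PGame.ofLists [0, G] [0, G] := by
  have hXG : upIter (m + 1) + star' ∈ G.leftMoves := by simp [hG]
  refine le_iff_forall_lf.2 ⟨?_, by
    simpa using ⟨upIter_add_star'_lf_zero _, lf_of_le_of_mem_leftMoves hXG le_rfl⟩⟩
  rw [leftMoves_add, leftMoves_star', Set.image_singleton, leftMoves_upIter_succ,
    Set.image_singleton]
  rintro _ (rfl | rfl)
  · exact lf_of_le_of_mem_leftMoves (by simp) (hG ▸ upIter_add_star'_le_ofLists m)
  · exact upIter_succ_add_zero_lf m
      (star'_le_ofLists_pair_zero (lf_of_le_of_mem_leftMoves hXG (star'_le_upIter_add_star' _)))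

theorem stmt9 (n : ℕ) (hn : 1 ≤ n)
    (G : PGame) (hG : G = PGame.ofLists [0, upIter n + star'] [0, upIter n + star']) :
    PGame.ofLists [0, G] [0, G] ≈ upIter n + star' := by
  obtain ⟨m, rfl⟩ : ∃ m, n = m + 1 := ⟨n - 1, by omega⟩
  exact ⟨ofLists_le_upIter_succ_add_star' m hG, upIter_succ_add_star'_le_ofLists m hG⟩
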